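/- arXiv:1008.1809 — 5 statements merged into one kernel-verified Lean document; each statement's English description precedes it below -/
import Mathlib

section
/- Let π be a permutation of Fin n. Call i ∈ Fin n cycle-maximal if i is the largest element of its cycle under π, i.e., i = max { π^k i : k ∈ ℕ }. For every Boolean assignment x : Fin n → Bool, PC(π, x) holds if and only if ∀ i ∈ supp(π) such that i is not cycle-maximal, (∀ j < i, x j = x (π j)) → x i ≤ x (π i). -/
/-- The permutation constraint `PC(π, x)` for a permutation `π` of `Fin n` and a
Boolean assignment `x : Fin n → Bool` (with `false < true`):
for every `i`, if `x j = x (π j)` for all `j < i`, then `x i ≤ x (π i)`. -/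
def PC {n : ℕ} (π : Equiv.Perm (Fin n)) (x : Fin n → Bool) : Prop :=
  ∀ i : Fin n, (∀ j : Fin n, j < i → x j = x (π j)) → x i ≤ x (π i)

/-- Lexicographic order on Boolean assignments `Fin n → Bool`, index `0` being the
most significant position and `false < true`. -/
def lexLe {n : ℕ} (x y : Fin n → Bool) : Prop :=
  x = y ∨ ∃ i : Fin n, (∀ j : Fin n, j < i → x j = y j) ∧ x i < y i

/-- **Cycle-maximal positions can be dropped from the permutation constraint:**
calling `i` cycle-maximal if `i` is the largest element of its cycle
`{π^k i : k ∈ ℕ}` under `π`, `PC(π, x)` holds iff for every `i` in the support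
of `π` that is not cycle-maximal, whenever `x j = x (π j)` for all `j < i`,
we have `x i ≤ x (π i)`. -/
theorem pc_iff_pc_off_cycle_max {n : ℕ} (π : Equiv.Perm (Fin n)) (x : Fin n → Bool) :
    PC π x ↔
      ∀ i : Fin n, π i ≠ i → ¬ (∀ k : ℕ, (π ^ k) i ≤ i) →
        (∀ j : Fin n, j < i → x j = x (π j)) → x i ≤ x (π i) := by
  constructor
  · intro h i _ _ hj
    exact h i hj
  · intro h i hj
    by_cases h1 : π i = i
    · rw [h1]
    by_cases h2 : ∀ k : ℕ, (π ^ k) i ≤ i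
    · have hm : (π ^ (orderOf π)) i = i := by
        rw [pow_orderOf_eq_one]; rfl
      have hpos : 0 < orderOf π := orderOf_pos π
      have key : ∀ j : ℕ, j ≤ orderOf π → x ((π ^ (orderOf π - j)) i) = x i := by
        intro j
        induction j with
        | zero => intro _; simpa using congrArg x hm
        | succ j ih =>
          intro hle
          have hle' : j ≤ orderOf π := Nat.le_of_succ_le hle
          set t := orderOf π - (j + 1) with ht
          rcases eq_or_lt_of_le (h2 t) with he | hlt
          · rw [he]
          · have hx := hj _ hlt
            have ht1 : t + 1 = orderOf π - j := by omega
            calc x ((π ^ t) i) = x (π ((π ^ t) i)) := hx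
              _ = x ((π ^ (t + 1)) i) := by rw [pow_succ']; rfl
              _ = x i := by rw [ht1]; exact ih hle'
      have hk := key (orderOf π - 1) (by omega)
      have h1' : orderOf π - (orderOf π - 1) = 1 := by omega
      rw [h1', pow_one] at hk
      rw [hk]
    · exact h i h1 h2 hj
end

section
/- Let G be a subgroup of the group of permutations of Fin n, acting on Boolean assignments by x ↦ x ∘ π. For every x : Fin n → Bool, the full lex-leader symmetry-breaking constraint ∀ π ∈ G, PC(π, x) holds if and only if x is lexicographically least in its orbit, i.e., x ≤lex y for every y in the orbit { x ∘ π : π ∈ G }. -/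
lemma PC_iff_lexLe {n : ℕ} (π : Equiv.Perm (Fin n)) (x : Fin n → Bool) :
    PC π x ↔ lexLe x (fun i => x (π i)) := by
  constructor
  · intro h
    by_cases hx : x = fun i => x (π i)
    · exact Or.inl hx
    · right
      have hne : Set.Nonempty {i : Fin n | x i ≠ x (π i)} := by
        by_contra hc
        rw [Set.not_nonempty_iff_eq_empty] at hc
        apply hx
        funext i
        by_contra hi
        exact absurd (hc ▸ hi : i ∈ (∅ : Set (Fin n))) (Set.notMem_empty i)
      obtain ⟨i, hi, hmin⟩ := wellFounded_lt.has_min _ hne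
      have hagree : ∀ j : Fin n, j < i → x j = x (π j) := by
        intro j hj
        by_contra hj'
        exact hmin j hj' hj
      refine ⟨i, hagree, ?_⟩
      exact lt_of_le_of_ne (h i hagree) hi
  · rintro (hx | ⟨k, hagree, hlt⟩) i hi
    · exact le_of_eq (congrFun hx i)
    · rcases lt_trichotomy i k with h' | h' | h'
      · exact le_of_eq (hagree i h')
      · exact le_of_lt (h' ▸ hlt)
      · exact absurd (hi k h') (ne_of_lt hlt)

/-- **The full lex-leader symmetry-breaking constraint characterises orbit lex-leaders:**
for a subgroup `G` of permutations of `Fin n` acting on assignments by `x ↦ x ∘ π`,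
`∀ π ∈ G, PC(π, x)` holds iff `x` is lexicographically least in its orbit
`{x ∘ π : π ∈ G}`. -/
theorem full_sbc_iff_lex_least_in_orbit {n : ℕ} (G : Subgroup (Equiv.Perm (Fin n)))
    (x : Fin n → Bool) :
    (∀ π ∈ G, PC π x) ↔
      ∀ y : Fin n → Bool, (∃ π ∈ G, y = fun i => x (π i)) → lexLe x y := by
  constructor
  · rintro h y ⟨π, hπ, rfl⟩
    exact (PC_iff_lexLe π x).mp (h π hπ)
  · intro h π hπ
    exact (PC_iff_lexLe π x).mpr (h _ ⟨π, hπ, rfl⟩)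
end

section
/- Let G be a subgroup of the group of permutations of Fin n, acting on Boolean assignments by x ↦ x ∘ π. Every orbit of this action on Fin n → Bool contains exactly one assignment x satisfying ∀ π ∈ G, PC(π, x), namely the unique lexicographically least element of the orbit. -/
/-!
`PC(σ, y)` says exactly that `y ≤lex y ∘ σ`: the first position where `y` and `y ∘ σ` differ
must have `y i < y (σ i)`. Hence `y` satisfies every constraint of `G` iff it is lex-below every
`y ∘ σ`, `σ ∈ G`, i.e. below every element of its orbit. Since `≤lex` is a linear order and the
orbit is finite and nonempty, the orbit has exactly one such element, its lex-least one.
-/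

section LexLe

variable {n : ℕ}

theorem lexLe_iff_toLex_le {x y : Fin n → Bool} : lexLe x y ↔ toLex x ≤ toLex y := by
  rw [le_iff_lt_or_eq, lexLe, Or.comm, toLex.injective.eq_iff]
  rfl

theorem lexLe_iff_forall_le {x y : Fin n → Bool} :
    lexLe x y ↔ ∀ i, (∀ j < i, x j = y j) → x i ≤ y i := by
  constructor
  · rintro (rfl | ⟨i, hagree, hlt⟩) k hk
    · exact le_rfl
    · rcases lt_trichotomy k i with hki | rfl | hik
      · exact (hagree k hki).le
      · exact hlt.le
      · exact absurd (hk i hik) hlt.ne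
  · intro h
    rw [lexLe_iff_toLex_le, ← not_lt]
    rintro ⟨i, hagree, hlt⟩
    exact (h i fun j hj => (hagree j hj).symm).not_gt hlt

theorem pc_iff_lexLe {σ : Equiv.Perm (Fin n)} {y : Fin n → Bool} :
    PC σ y ↔ lexLe y (fun i => y (σ i)) :=
  lexLe_iff_forall_le.symm

theorem lexLe_antisymm {x y : Fin n → Bool} (hxy : lexLe x y) (hyx : lexLe y x) : x = y :=
  toLex.injective <| le_antisymm (lexLe_iff_toLex_le.1 hxy) (lexLe_iff_toLex_le.1 hyx)

theorem exists_mem_forall_lexLe {s : Set (Fin n → Bool)} (hs : s.Nonempty) :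
    ∃ y ∈ s, ∀ z ∈ s, lexLe y z := by
  obtain ⟨y, hy, hmin⟩ := s.exists_min_image toLex s.toFinite hs
  exact ⟨y, hy, fun z hz => lexLe_iff_toLex_le.2 (hmin z hz)⟩

end LexLe

section PermOrbit

variable {α β : Type*} (G : Subgroup (Equiv.Perm α))

def permOrbit (x : α → β) : Set (α → β) :=
  {z | ∃ π ∈ G, z = fun i => x (π i)}

variable {G}

theorem self_mem_permOrbit (x : α → β) : x ∈ permOrbit G x :=
  ⟨1, G.one_mem, rfl⟩

theorem comp_mem_permOrbit {x y : α → β} (hy : y ∈ permOrbit G x) {σ : Equiv.Perm α}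
    (hσ : σ ∈ G) : (fun i => y (σ i)) ∈ permOrbit G x := by
  obtain ⟨π, hπ, rfl⟩ := hy
  exact ⟨π * σ, G.mul_mem hπ hσ, rfl⟩

theorem exists_eq_comp_of_mem_permOrbit {x y z : α → β} (hy : y ∈ permOrbit G x)
    (hz : z ∈ permOrbit G x) : ∃ σ ∈ G, z = fun i => y (σ i) := by
  obtain ⟨ρ, hρ, rfl⟩ := hy
  obtain ⟨π, hπ, rfl⟩ := hz
  exact ⟨ρ⁻¹ * π, G.mul_mem (G.inv_mem hρ) hπ, by simp⟩

end PermOrbit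

theorem forall_pc_iff_forall_lexLe {n : ℕ} {G : Subgroup (Equiv.Perm (Fin n))}
    {x y : Fin n → Bool} (hy : y ∈ permOrbit G x) :
    (∀ σ ∈ G, PC σ y) ↔ ∀ z ∈ permOrbit G x, lexLe y z := by
  constructor
  · intro hpc z hz
    obtain ⟨σ, hσ, rfl⟩ := exists_eq_comp_of_mem_permOrbit hy hz
    exact pc_iff_lexLe.1 (hpc σ hσ)
  · exact fun hmin σ hσ => pc_iff_lexLe.2 (hmin _ (comp_mem_permOrbit hy hσ))

/-- **Full lex-leader symmetry-breaking selects exactly one representative per orbit:**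
for a subgroup `G` of permutations of `Fin n` acting on assignments by `x ↦ x ∘ π`,
every orbit contains exactly one assignment `y` satisfying `∀ π ∈ G, PC(π, y)`,
namely the unique lexicographically least element of the orbit. -/
theorem full_sbc_unique_representative {n : ℕ} (G : Subgroup (Equiv.Perm (Fin n)))
    (x : Fin n → Bool) :
    (∃! y : Fin n → Bool,
        (∃ π ∈ G, y = fun i => x (π i)) ∧ ∀ σ ∈ G, PC σ y) ∧
      ∀ y : Fin n → Bool,
        ((∃ π ∈ G, y = fun i => x (π i)) ∧ ∀ σ ∈ G, PC σ y) →
          ∀ z : Fin n → Bool, (∃ π ∈ G, z = fun i => x (π i)) → lexLe y z := by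
  obtain ⟨y, hy, hmin⟩ := exists_mem_forall_lexLe ⟨x, self_mem_permOrbit (G := G) x⟩
  refine ⟨⟨y, ⟨hy, (forall_pc_iff_forall_lexLe hy).2 hmin⟩, ?_⟩, ?_⟩
  · rintro y' ⟨hy', hpc⟩
    exact lexLe_antisymm ((forall_pc_iff_forall_lexLe hy').1 hpc y hy) (hmin y' hy')
  · rintro y' ⟨hy', hpc⟩
    exact (forall_pc_iff_forall_lexLe hy').1 hpc
end

section
/- Let G be a subgroup of the group of permutations of Fin n, acting on Boolean assignments by x ↦ x ∘ π, and let S ⊆ (Fin n → Bool) be closed under this action (if x ∈ S and π ∈ G then x ∘ π ∈ S). Then every x ∈ S is of the form x₀ ∘ π for some π ∈ G and some x₀ ∈ S satisfying ∀ σ ∈ G, PC(σ, x₀); in particular, S is nonempty if and only if { x ∈ S : ∀ σ ∈ G, PC(σ, x) } is nonempty. -/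
lemma lexLe_of_toLex_le {n : ℕ} {x y : Fin n → Bool}
    (h : toLex x ≤ toLex y) : lexLe x y := by
  rcases lt_or_eq_of_le h with h | h
  · obtain ⟨i, hlt, hi⟩ := h
    exact Or.inr ⟨i, fun j hj => hlt j hj, hi⟩
  · exact Or.inl (congrArg ofLex h)

lemma pc_of_lexLe {n : ℕ} {x : Fin n → Bool} {σ : Equiv.Perm (Fin n)}
    (h : lexLe x fun i => x (σ i)) : PC σ x := by
  rcases h with h | ⟨k, hk, hklt⟩
  · intro i _
    exact le_of_eq (congrFun h i)
  · intro i hi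
    rcases lt_trichotomy i k with hik | rfl | hik
    · exact le_of_eq (hk i hik)
    · exact le_of_lt hklt
    · exact absurd (hi k hik) (ne_of_lt hklt)

/-- **Symmetry-breaking constraints preserve solvability of symmetric solution sets:**
if `S ⊆ (Fin n → Bool)` is closed under the action `x ↦ x ∘ π` of a subgroup `G` of
permutations of `Fin n`, then every `x ∈ S` is of the form `x₀ ∘ π` for some `π ∈ G`
and some `x₀ ∈ S` satisfying all permutation constraints; in particular `S` is
nonempty iff `{x ∈ S | ∀ σ ∈ G, PC(σ, x)}` is nonempty. -/
theorem sbc_preserves_solvability {n : ℕ} (G : Subgroup (Equiv.Perm (Fin n)))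
    (S : Set (Fin n → Bool))
    (hclosed : ∀ x ∈ S, ∀ π ∈ G, (fun i => x (π i)) ∈ S) :
    (∀ x ∈ S, ∃ x₀ ∈ S, (∀ σ ∈ G, PC σ x₀) ∧ ∃ π ∈ G, x = fun i => x₀ (π i)) ∧
      (S.Nonempty ↔ {x ∈ S | ∀ σ ∈ G, PC σ x}.Nonempty) := by
  have main : ∀ x ∈ S, ∃ x₀ ∈ S, (∀ σ ∈ G, PC σ x₀) ∧ ∃ π ∈ G, x = fun i => x₀ (π i) := by
    intro x hx
    haveI : WellFoundedLT (Fin n) := Finite.to_wellFoundedLT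
    letI : LinearOrder (Lex (Fin n → Bool)) := inferInstance
    obtain ⟨π₀, hπ₀, hmin⟩ := Set.exists_min_image (G : Set (Equiv.Perm (Fin n)))
      (fun π => toLex (fun i => x (π i))) (Set.toFinite _) ⟨1, one_mem G⟩
    set x₀ : Fin n → Bool := fun i => x (π₀ i) with hx₀
    refine ⟨x₀, hclosed x hx π₀ hπ₀, ?_, π₀⁻¹, inv_mem hπ₀, ?_⟩
    · intro σ hσ
      have h := hmin (π₀ * σ) (mul_mem hπ₀ hσ)
      have h' : (fun i => x ((π₀ * σ) i)) = fun i => x₀ (σ i) := rfl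
      rw [h'] at h
      exact pc_of_lexLe (lexLe_of_toLex_le h)
    · funext i
      simp [hx₀]
  refine ⟨main, ?_⟩
  constructor
  · rintro ⟨x, hx⟩
    obtain ⟨x₀, hx₀, hpc, _⟩ := main x hx
    exact ⟨x₀, hx₀, hpc⟩
  · rintro ⟨x, hx, _⟩
    exact ⟨x, hx⟩
end

section
/- Let x, y : Fin n → Bool with n ≥ 1, and define propositions c_1, …, c_{n+1} by: c_{n+1} = True, c_1 = (x 0 ≤ y 0) ∧ c_2, and for 2 ≤ i ≤ n, c_i = (x (i−2) ≥ y (i−2)) → ((x (i−1) ≤ y (i−1)) ∧ c_{i+1}) (indices shifted so that the i-th constrained position is i−1). Then c_1 holds if and only if x ≤lex y. In particular, this chained encoding of the permutation constraint, which is linear in n, is equivalent to the lexicographic comparison of x with y. -/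
def sLex {n : ℕ} (x y : Fin n → Bool) (k : ℕ) : Prop :=
  (∃ m : Fin n, k ≤ m.val ∧ (∀ j : Fin n, k ≤ j.val → j.val < m.val → x j = y j) ∧ x m < y m) ∨
  (∀ j : Fin n, k ≤ j.val → x j = y j)

lemma sLex_top {n : ℕ} (x y : Fin n → Bool) : sLex x y n := by
  right; intro j hj; exact absurd j.isLt (by omega)

lemma sLex_zero {n : ℕ} (x y : Fin n → Bool) : sLex x y 0 ↔ lexLe x y := by
  constructor
  · rintro (⟨m, -, h, hlt⟩ | h)
    · exact Or.inr ⟨m, fun j hj => h j (Nat.zero_le _) hj, hlt⟩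
    · exact Or.inl (funext fun j => h j (Nat.zero_le _))
  · rintro (rfl | ⟨m, h, hlt⟩)
    · right; intro j _; rfl
    · left; exact ⟨m, Nat.zero_le _, fun j _ hj => h j hj, hlt⟩

lemma sLex_step {n : ℕ} (x y : Fin n → Bool) (k : ℕ) (hk : k < n) :
    sLex x y k ↔ (x ⟨k, hk⟩ < y ⟨k, hk⟩ ∨ (x ⟨k, hk⟩ = y ⟨k, hk⟩ ∧ sLex x y (k + 1))) := by
  constructor
  · rintro (⟨m, hm, h, hlt⟩ | h)
    · rcases eq_or_lt_of_le hm with he | hlt'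
      · left; have : (⟨k, hk⟩ : Fin n) = m := by
          apply Fin.ext; simp only [Fin.val_mk]; omega
        rwa [this]
      · right
        exact ⟨h ⟨k, hk⟩ le_rfl hlt',
          Or.inl ⟨m, by omega, fun j hj hj' => h j (by omega) hj', hlt⟩⟩
    · right
      exact ⟨h ⟨k, hk⟩ le_rfl, Or.inr fun j hj => h j (by omega)⟩
  · rintro (hlt | ⟨heq, ⟨m, hm, h, hlt⟩ | h⟩)
    · left
      exact ⟨⟨k, hk⟩, le_rfl,
        fun j hj hj' => absurd hj (by simp only [Fin.val_mk] at hj' ⊢; omega), hlt⟩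
    · left
      refine ⟨m, by omega, fun j hj hj' => ?_, hlt⟩
      rcases eq_or_lt_of_le hj with he | h'
      · have : j = (⟨k, hk⟩ : Fin n) := by
          apply Fin.ext; simp only [Fin.val_mk]; omega
        rw [this]; exact heq
      · exact h j (by omega) hj'
    · right; intro j hj
      rcases eq_or_lt_of_le hj with he | h'
      · have : j = (⟨k, hk⟩ : Fin n) := by
          apply Fin.ext; simp only [Fin.val_mk]; omega
        rw [this]; exact heq
      · exact h j (by omega)

/-- **The chained (linear-size) encoding is equivalent to lexicographic comparison:**
given `x y : Fin n → Bool` with `n ≥ 1`, and propositions `c 1, …, c (n+1)` with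
`c (n+1) = True`, `c 1 = (x 0 ≤ y 0) ∧ c 2`, and, for `2 ≤ i ≤ n`,
`c i = (x (i-2) ≥ y (i-2)) → ((x (i-1) ≤ y (i-1)) ∧ c (i+1))`,
the proposition `c 1` holds iff `x ≤lex y`. -/
theorem chained_encoding_iff_lexLe {n : ℕ} (hn : 1 ≤ n) (x y : Fin n → Bool)
    (c : ℕ → Prop)
    (htop : c (n + 1) ↔ True)
    (h1 : c 1 ↔ (x ⟨0, hn⟩ ≤ y ⟨0, hn⟩) ∧ c 2)
    (hi : ∀ i : ℕ, (h2 : 2 ≤ i) → (hin : i ≤ n) →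
      (c i ↔ (y ⟨i - 2, by omega⟩ ≤ x ⟨i - 2, by omega⟩ →
        (x ⟨i - 1, by omega⟩ ≤ y ⟨i - 1, by omega⟩) ∧ c (i + 1)))) :
    c 1 ↔ lexLe x y := by
  have key : ∀ d k, ∀ hk : k < n, n - 1 - k = d →
      (c (k + 2) ↔ (x ⟨k, hk⟩ < y ⟨k, hk⟩ ∨ sLex x y (k + 1))) := by
    intro d
    induction d with
    | zero =>
      intro k hk hd
      have h2 : k + 2 = n + 1 := by omega
      rw [h2, htop]
      constructor
      · intro _
        exact Or.inr (by rw [show k + 1 = n by omega]; exact sLex_top x y)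
      · intro _; trivial
    | succ d ih =>
      intro k hk hd
      have hk2 : k + 2 ≤ n := by omega
      have e1 := hi (k + 2) (by omega) hk2
      have e2 := ih (k + 1) (by omega) (by omega)
      have e3 := sLex_step x y (k + 1) (by omega)
      simp only [show k + 2 - 2 = k from by omega,
        show k + 2 - 1 = k + 1 from by omega] at e1
      rw [e1, e2] at *
      rw [e3]
      have hb1 : y ⟨k, hk⟩ ≤ x ⟨k, hk⟩ ↔ ¬ (x ⟨k, hk⟩ < y ⟨k, hk⟩) := not_lt.symm
      have hb2 : ∀ a b : Bool, a ≤ b ↔ (a < b ∨ a = b) := fun a b => le_iff_lt_or_eq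
      rw [hb1, hb2]
      by_cases hxy : x ⟨k, hk⟩ < y ⟨k, hk⟩ <;>
        by_cases hxy1 : x ⟨k + 1, by omega⟩ < y ⟨k + 1, by omega⟩ <;>
        simp [hxy, hxy1] <;> tauto
  have h2key := key (n - 1) 0 (by omega) (by omega)
  rw [h1, show (2:ℕ) = 0 + 2 from rfl, h2key]
  rw [← sLex_zero x y, sLex_step x y 0 hn]
  have hb2 : x ⟨0, hn⟩ ≤ y ⟨0, hn⟩ ↔ (x ⟨0, hn⟩ < y ⟨0, hn⟩ ∨ x ⟨0, hn⟩ = y ⟨0, hn⟩) :=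
    le_iff_lt_or_eq
  rw [hb2]
  by_cases hxy : x ⟨0, hn⟩ < y ⟨0, hn⟩ <;> simp [hxy] <;> tauto
end
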